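/- arXiv:1501.01239 — 6 statements merged into one kernel-verified Lean document; each statement's English description precedes it below -/
import Mathlib

section
/- For any complete and decomposable SPN whose sum-node edge weights are nonnegative and sum to 1 at every sum node, the sum of the network polynomial over all complete assignments of the Boolean variables equals 1. -/
noncomputable section

open Finset

/-- A Sum-Product Network over `N` Boolean variables: leaves are indicators
`I[X_i = b]`, internal nodes are weighted sums and products. -/
inductive SPN (N : ℕ) where
  | leaf (i : Fin N) (b : Bool)
  | sum (k : ℕ) (w : Fin k → ℝ) (ch : Fin k → SPN N)
  | prod (k : ℕ) (ch : Fin k → SPN N)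

namespace SPN

variable {N : ℕ}

/-- The network polynomial, evaluated at a complete assignment. -/
def eval : SPN N → (Fin N → Bool) → ℝ
  | .leaf i b, x => if x i = b then 1 else 0
  | .sum _ w ch, x => ∑ j, w j * eval (ch j) x
  | .prod _ ch, x => ∏ j, eval (ch j) x

/-- The scope of a node: the variables appearing among its descendant indicators. -/
def scope : SPN N → Finset (Fin N)
  | .leaf i _ => {i}
  | .sum _ _ ch => univ.biUnion fun j => scope (ch j)
  | .prod _ ch => univ.biUnion fun j => scope (ch j)

/-- Size of an SPN: number of nodes plus number of edges. -/
def size : SPN N → ℕ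
  | .leaf _ _ => 1
  | .sum k _ ch => 1 + k + ∑ j, size (ch j)
  | .prod k ch => 1 + k + ∑ j, size (ch j)

/-- Completeness: all children of every sum node have the same scope. -/
def complete : SPN N → Prop
  | .leaf _ _ => True
  | .sum _ _ ch => (∀ i j, scope (ch i) = scope (ch j)) ∧ ∀ j, complete (ch j)
  | .prod _ ch => ∀ j, complete (ch j)

/-- Decomposability: children of every product node have pairwise disjoint scopes. -/
def decomposable : SPN N → Prop
  | .leaf _ _ => True
  | .sum _ _ ch => ∀ j, decomposable (ch j)
  | .prod _ ch =>
      (∀ i j, i ≠ j → Disjoint (scope (ch i)) (scope (ch j))) ∧ ∀ j, decomposable (ch j)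

/-- The set of indicators `(variable, value)` appearing among descendants. -/
def indicators : SPN N → Finset (Fin N × Bool)
  | .leaf i b => {(i, b)}
  | .sum _ _ ch => univ.biUnion fun j => indicators (ch j)
  | .prod _ ch => univ.biUnion fun j => indicators (ch j)

/-- Consistency: no variable appears negated in one child of a product node and
non-negated in another child. -/
def consistent : SPN N → Prop
  | .leaf _ _ => True
  | .sum _ _ ch => ∀ j, consistent (ch j)
  | .prod _ ch =>
      (∀ i j X, i ≠ j → (X, true) ∈ indicators (ch i) →
        (X, false) ∈ indicators (ch j) → False) ∧ ∀ j, consistent (ch j)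

/-- All sum-node weights are nonnegative. -/
def nonnegWeights : SPN N → Prop
  | .leaf _ _ => True
  | .sum _ w ch => (∀ j, 0 ≤ w j) ∧ ∀ j, nonnegWeights (ch j)
  | .prod _ ch => ∀ j, nonnegWeights (ch j)

/-- Weight-normalized: at every sum node the weights are nonnegative and sum to 1. -/
def weightNormalized : SPN N → Prop
  | .leaf _ _ => True
  | .sum _ w ch => (∀ j, 0 ≤ w j) ∧ (∑ j, w j) = 1 ∧ ∀ j, weightNormalized (ch j)
  | .prod _ ch => ∀ j, weightNormalized (ch j)

/-- Extend an assignment of the scope variables to a complete assignment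
(variables outside the scope are set to `false`; `eval` does not depend on them). -/
def extendScope (S : SPN N) (y : {i // i ∈ scope S} → Bool) : Fin N → Bool :=
  fun i => if h : i ∈ scope S then y ⟨i, h⟩ else false

/-- The sum of the network polynomial of `S` over all assignments of the
variables in `scope S`. -/
def val (S : SPN N) : ℝ :=
  ∑ y : {i // i ∈ scope S} → Bool, eval S (extendScope S y)

/-- The probability distribution induced by an SPN:
`Pr S x = f_S(x) / Σ_y f_S(y)`, the sum ranging over assignments of the scope. -/
def Pr (S : SPN N) (x : Fin N → Bool) : ℝ := eval S x / val S

end SPN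
namespace SPN

variable {N : ℕ}

/-- A monomial: a coefficient together with a multiset of indicators. -/
abbrev Monomial (N : ℕ) := ℝ × Multiset (Fin N × Bool)

/-- Product of two sum-of-products expansions. -/
def mulMono (a b : Multiset (Monomial N)) : Multiset (Monomial N) :=
  a.bind fun m => b.map fun m' => (m.1 * m'.1, m.2 + m'.2)

/-- The fully expanded sum-of-products form of the network polynomial,
obtained by distributing products over sums. -/
def monomials : SPN N → Multiset (Monomial N)
  | .leaf i b => {(1, {(i, b)})}
  | .sum _ w ch => ∑ j, (monomials (ch j)).map fun m => (w j * m.1, m.2)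
  | .prod k ch => (List.ofFn fun j : Fin k => monomials (ch j)).foldr mulMono {(1, 0)}

/-- Two SPNs have the same DAG structure (only sum-node weights may differ). -/
def sameShape : SPN N → SPN N → Prop
  | .leaf i b, .leaf i' b' => i = i' ∧ b = b'
  | .sum k _ ch, .sum k' _ ch' => ∃ h : k = k', ∀ j, sameShape (ch j) (ch' (Fin.cast h j))
  | .prod k ch, .prod k' ch' => ∃ h : k = k', ∀ j, sameShape (ch j) (ch' (Fin.cast h j))
  | _, _ => False

/-- `IsChild c p`: `c` is a child of `p`. -/
inductive IsChild : SPN N → SPN N → Prop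
  | sum {k : ℕ} {w : Fin k → ℝ} {ch : Fin k → SPN N} (j : Fin k) :
      IsChild (ch j) (.sum k w ch)
  | prod {k : ℕ} {ch : Fin k → SPN N} (j : Fin k) :
      IsChild (ch j) (.prod k ch)

/-- `Descendant d v`: `d` is a (weak) descendant of `v`. -/
def Descendant : SPN N → SPN N → Prop := Relation.ReflTransGen IsChild

/-- A decision stump: a univariate distribution `p·I[X=1] + (1-p)·I[X=0]`
over a single Boolean variable, used as terminal node of a normal SPN. -/
def isStump : SPN N → Prop
  | .sum 2 w ch =>
      (∃ i, ch 0 = .leaf i true ∧ ch 1 = .leaf i false) ∧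
      0 ≤ w 0 ∧ 0 ≤ w 1 ∧ w 0 + w 1 = 1
  | _ => False

/-- Condition 3 of normality: terminal nodes are univariate distributions and
every (proper) sum node has scope of size at least 2. -/
def normal3 : SPN N → Prop
  | .leaf _ _ => False
  | .sum k w ch =>
      isStump (SPN.sum k w ch) ∨
      (2 ≤ (scope (SPN.sum k w ch)).card ∧ ∀ j, normal3 (ch j))
  | .prod _ ch => ∀ j, normal3 (ch j)

/-- A normal SPN: complete, decomposable, weight-normalized, terminal nodes are
univariate distributions, and sum nodes have scope of size at least 2. -/
def normal (S : SPN N) : Prop :=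
  complete S ∧ decomposable S ∧ weightNormalized S ∧ normal3 S

/-- The height of an SPN: length of the longest root-to-leaf path. -/
def height : SPN N → ℕ
  | .leaf _ _ => 0
  | .sum _ _ ch => 1 + Finset.univ.sup fun j => height (ch j)
  | .prod _ ch => 1 + Finset.univ.sup fun j => height (ch j)

/-- Sum layers alternate with product layers. -/
def alternating : SPN N → Prop
  | .leaf _ _ => True
  | .sum _ _ ch => ∀ j,
      (¬ ∃ (k' : ℕ) (w' : Fin k' → ℝ) (ch' : Fin k' → SPN N), ch j = SPN.sum k' w' ch') ∧
      alternating (ch j)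
  | .prod _ ch => ∀ j,
      (¬ ∃ (k' : ℕ) (ch' : Fin k' → SPN N), ch j = SPN.prod k' ch') ∧
      alternating (ch j)

/-- The number of hidden-variable parents of the observable `X` in the constructed
BN: the number of sum nodes whose scope contains `X`. -/
def parentCount : SPN N → Fin N → ℕ
  | .leaf _ _, _ => 0
  | .sum k w ch, X =>
      (if X ∈ scope (SPN.sum k w ch) then 1 else 0) + ∑ j, parentCount (ch j) X
  | .prod _ ch, X => ∑ j, parentCount (ch j) X

/-- The number of sum nodes (hidden variables of the constructed BN). -/
def countSum : SPN N → ℕ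
  | .leaf _ _ => 0
  | .sum _ _ ch => 1 + ∑ j, countSum (ch j)
  | .prod _ ch => ∑ j, countSum (ch j)

/-- Total size of the decision-stump ADDs of the hidden variables. -/
def stumpsSize : SPN N → ℕ
  | .leaf _ _ => 0
  | .sum k _ ch => (1 + k) + ∑ j, stumpsSize (ch j)
  | .prod _ ch => ∑ j, stumpsSize (ch j)

/-- Total number of edges of the bipartite BN graph: a hidden variable `H_v`
points to observable `X` iff `X ∈ scope v`. -/
def sumScopeEdges : SPN N → ℕ
  | .leaf _ _ => 0
  | .sum k w ch => (scope (SPN.sum k w ch)).card + ∑ j, sumScopeEdges (ch j)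
  | .prod _ ch => ∑ j, sumScopeEdges (ch j)

/-- Size of the ADD `A_X` of observable `X`: the size of the sub-SPN induced by
the nodes whose scope contains `X` (an upper bound on the contracted ADD). -/
def addSize : SPN N → Fin N → ℕ
  | .leaf i _, X => if i = X then 1 else 0
  | .sum k w ch, X =>
      (if X ∈ scope (SPN.sum k w ch) then
        1 + (Finset.univ.filter fun j => X ∈ scope (ch j)).card
       else 0) + ∑ j, addSize (ch j) X
  | .prod k ch, X =>
      (if X ∈ scope (SPN.prod k ch) then
        1 + (Finset.univ.filter fun j => X ∈ scope (ch j)).card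
       else 0) + ∑ j, addSize (ch j) X

end SPN

/-- A bipartite Bayesian network over `N` observable Boolean variables:
hidden (source) variables `H` with unconditional priors, and observable
variables whose CPDs are conditioned on the hidden variables. -/
structure BayesNet (N : ℕ) where
  H : Type
  fintypeH : Fintype H
  decEqH : DecidableEq H
  dom : H → ℕ
  prior : (h : H) → Fin (dom h) → ℝ
  cpd : Fin N → ((h : H) → Fin (dom h)) → Bool → ℝ

attribute [instance] BayesNet.fintypeH BayesNet.decEqH

/-- The marginal distribution of the observables in a bipartite BN: sum over all
hidden assignments of the product of all priors and all CPDs. -/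
def BayesNet.PrB {N : ℕ} (B : BayesNet N) (x : Fin N → Bool) : ℝ :=
  ∑ σ : (h : B.H) → Fin (B.dom h),
    (∏ h, B.prior h (σ h)) * ∏ i, B.cpd i σ (x i)
namespace SPNAux

open Finset SPN

lemma eval_eq_of_agree {N : ℕ} (S : SPN N) : ∀ (x x' : Fin N → Bool),
    (∀ i ∈ S.scope, x i = x' i) → S.eval x = S.eval x' := by
  induction S with
  | leaf i b =>
      intro x x' h
      simp only [SPN.eval]
      rw [h i (by simp [SPN.scope])]
  | sum k w ch ih =>
      intro x x' h
      simp only [SPN.eval]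
      refine Finset.sum_congr rfl fun j _ => ?_
      rw [ih j x x' fun i hi => h i (by
        simp only [SPN.scope, Finset.mem_biUnion]
        exact ⟨j, Finset.mem_univ j, hi⟩)]
  | prod k ch ih =>
      intro x x' h
      simp only [SPN.eval]
      refine Finset.prod_congr rfl fun j _ => ?_
      exact ih j x x' fun i hi => h i (by
        simp only [SPN.scope, Finset.mem_biUnion]
        exact ⟨j, Finset.mem_univ j, hi⟩)

lemma card_fun_bool {N : ℕ} : Fintype.card (Fin N → Bool) = 2 ^ N := by
  simp [Fintype.card_fun]

lemma pair_split {N : ℕ} (A : Finset (Fin N)) (f g : (Fin N → Bool) → ℝ)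
    (hf : ∀ x x', (∀ i ∈ A, x i = x' i) → f x = f x')
    (hg : ∀ x x', (∀ i ∉ A, x i = x' i) → g x = g x') :
    (∑ x, f x) * (∑ x, g x) = (2:ℝ) ^ N * ∑ x, f x * g x := by
  classical
  set e := (Equiv.piEquivPiSubtypeProd (fun i : Fin N => i ∈ A) (fun _ => Bool)).symm with he
  have hsum : ∀ h : (Fin N → Bool) → ℝ, ∑ x, h x = ∑ p, h (e p) :=
    fun h => (Fintype.sum_equiv e _ _ (fun p => rfl)).symm
  have happ : ∀ u v (i : Fin N), e (u, v) i = if h : i ∈ A then u ⟨i, h⟩ else v ⟨i, h⟩ :=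
    fun u v i => rfl
  have hfe : ∀ u v v', f (e (u, v)) = f (e (u, v')) := by
    intro u v v'
    apply hf
    intro i hi
    rw [happ, happ, dif_pos hi, dif_pos hi]
  have hge : ∀ u u' v, g (e (u, v)) = g (e (u', v)) := by
    intro u u' v
    apply hg
    intro i hi
    rw [happ, happ, dif_neg hi, dif_neg hi]
  have hF : ∑ x, f x = (∑ u, f (e (u, fun _ => false))) * (Fintype.card ({i : Fin N // ¬ i ∈ A} → Bool) : ℝ) := by
    rw [hsum f, Fintype.sum_prod_type]
    rw [Finset.sum_congr rfl fun u _ => Finset.sum_congr rfl fun v _ => hfe u v (fun _ => false)]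
    simp only [Finset.sum_const, Finset.card_univ, nsmul_eq_mul]
    rw [← Finset.mul_sum, mul_comm]
  have hG : ∑ x, g x = (Fintype.card ({i : Fin N // i ∈ A} → Bool) : ℝ) * (∑ v, g (e ((fun _ => false), v))) := by
    rw [hsum g, Fintype.sum_prod_type]
    rw [Finset.sum_congr rfl fun u _ => Finset.sum_congr rfl fun v _ => hge u (fun _ => false) v]
    simp only [Finset.sum_const, Finset.card_univ, nsmul_eq_mul]
  have hFG : ∑ x, f x * g x
      = (∑ u, f (e (u, fun _ => false))) * (∑ v, g (e ((fun _ => false), v))) := by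
    rw [hsum (fun x => f x * g x), Fintype.sum_prod_type, Finset.sum_mul_sum]
    refine Finset.sum_congr rfl fun u _ => Finset.sum_congr rfl fun v _ => ?_
    rw [hfe u v (fun _ => false), hge u (fun _ => false) v]
  have hcard : (Fintype.card ({i : Fin N // i ∈ A} → Bool) : ℝ)
      * (Fintype.card ({i : Fin N // ¬ i ∈ A} → Bool) : ℝ) = (2:ℝ) ^ N := by
    rw [← Nat.cast_mul, ← Fintype.card_prod,
      ← Fintype.card_congr (Equiv.piEquivPiSubtypeProd (fun i : Fin N => i ∈ A) (fun _ => Bool)),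
      card_fun_bool]
    push_cast
    ring
  rw [hF, hG, hFG]
  rw [← hcard]
  ring

lemma finset_split {N k : ℕ} (f : Fin k → (Fin N → Bool) → ℝ) (T : Fin k → Finset (Fin N))
    (hloc : ∀ j x x', (∀ i ∈ T j, x i = x' i) → f j x = f j x')
    (s : Finset (Fin k))
    (hdisj : ∀ i ∈ s, ∀ j ∈ s, i ≠ j → Disjoint (T i) (T j)) :
    (∑ x, ∏ j ∈ s, f j x) * ((2:ℝ) ^ N) ^ s.card = (2:ℝ) ^ N * ∏ j ∈ s, ∑ x, f j x := by
  classical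
  induction s using Finset.induction_on with
  | empty => simp [card_fun_bool]
  | @insert a s ha ih =>
      have hdisj' : ∀ i ∈ s, ∀ j ∈ s, i ≠ j → Disjoint (T i) (T j) :=
        fun i hi j hj => hdisj i (Finset.mem_insert_of_mem hi) j (Finset.mem_insert_of_mem hj)
      have hpair := pair_split (T a) (f a) (fun x => ∏ j ∈ s, f j x)
        (hloc a)
        (by
          intro x x' h
          refine Finset.prod_congr rfl fun j hj => ?_
          refine hloc j x x' fun i hi => h i ?_
          have hd := hdisj a (Finset.mem_insert_self a s) j (Finset.mem_insert_of_mem hj)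
            (by rintro rfl; exact ha hj)
          exact fun hia => (Finset.disjoint_left.mp hd hia) hi)
      rw [Finset.card_insert_of_notMem ha, Finset.prod_insert ha]
      have hL : ∑ x, ∏ j ∈ insert a s, f j x = ∑ x, f a x * ∏ j ∈ s, f j x :=
        Finset.sum_congr rfl fun x _ => Finset.prod_insert ha
      rw [hL, pow_succ]
      calc (∑ x, f a x * ∏ j ∈ s, f j x) * (((2:ℝ) ^ N) ^ s.card * (2:ℝ) ^ N)
          = ((2:ℝ) ^ N * ∑ x, f a x * ∏ j ∈ s, f j x) * ((2:ℝ) ^ N) ^ s.card := by ring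
        _ = ((∑ x, f a x) * ∑ x, ∏ j ∈ s, f j x) * ((2:ℝ) ^ N) ^ s.card := by rw [hpair]
        _ = (∑ x, f a x) * ((∑ x, ∏ j ∈ s, f j x) * ((2:ℝ) ^ N) ^ s.card) := by ring
        _ = (∑ x, f a x) * ((2:ℝ) ^ N * ∏ j ∈ s, ∑ x, f j x) := by rw [ih hdisj']
        _ = (2:ℝ) ^ N * ((∑ x, f a x) * ∏ j ∈ s, ∑ x, f j x) := by ring

lemma main_lemma {N : ℕ} (S : SPN N) (hc : S.complete) (hd : S.decomposable)
    (hw : S.weightNormalized) :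
    (∑ x : Fin N → Bool, S.eval x) * (2:ℝ) ^ (S.scope.card) = (2:ℝ) ^ N := by
  classical
  induction S with
  | leaf i b =>
      simp only [SPN.eval, SPN.scope, Finset.card_singleton, pow_one]
      have hinv : Function.Involutive (fun x : Fin N → Bool => Function.update x i (!x i)) := by
        intro x
        ext j
        by_cases h : j = i
        · subst h; simp
        · simp [Function.update_of_ne h]
      have hflip : (∑ x : Fin N → Bool, if x i = b then (1:ℝ) else 0)
          = ∑ x : Fin N → Bool, if x i = b then (0:ℝ) else 1 := by
        rw [← Equiv.sum_comp (Function.Involutive.toPerm _ hinv)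
          (fun x : Fin N → Bool => if x i = b then (0:ℝ) else 1)]
        refine Finset.sum_congr rfl fun x _ => ?_
        have : Function.Involutive.toPerm _ hinv x i = !x i := by
          simp [Function.Involutive.toPerm]
        rw [this]
        cases hxi : x i <;> cases b <;> simp
      have h2 : (∑ x : Fin N → Bool, if x i = b then (1:ℝ) else 0)
          + (∑ x : Fin N → Bool, if x i = b then (0:ℝ) else 1) = (2:ℝ) ^ N := by
        rw [← Finset.sum_add_distrib]
        have : ∀ x : Fin N → Bool,
            ((if x i = b then (1:ℝ) else 0) + (if x i = b then (0:ℝ) else 1)) = 1 := by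
          intro x; by_cases h : x i = b <;> simp [h]
        rw [Finset.sum_congr rfl fun x _ => this x]
        simp [card_fun_bool]
      rw [← hflip] at h2
      linarith
  | sum k w ch ih =>
      obtain ⟨hwn, hw1, hwr⟩ := hw
      obtain ⟨hsc, hcr⟩ := hc
      have hk : k ≠ 0 := by
        rintro rfl
        simp at hw1
      obtain ⟨j₀⟩ : Nonempty (Fin k) := ⟨⟨0, Nat.pos_of_ne_zero hk⟩⟩
      have hscope : ∀ j, SPN.scope (SPN.sum k w ch) = SPN.scope (ch j) := by
        intro j
        apply Finset.Subset.antisymm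
        · simp only [SPN.scope]
          exact Finset.biUnion_subset.mpr fun j' _ => le_of_eq (hsc j' j)
        · simp only [SPN.scope]
          exact Finset.subset_biUnion_of_mem (fun j => SPN.scope (ch j)) (Finset.mem_univ j)
      simp only [SPN.eval]
      rw [Finset.sum_comm]
      rw [Finset.sum_mul]
      calc ∑ j, (∑ x : Fin N → Bool, w j * SPN.eval (ch j) x) * (2:ℝ) ^ (SPN.scope (SPN.sum k w ch)).card
          = ∑ j, w j * ((∑ x : Fin N → Bool, SPN.eval (ch j) x) * (2:ℝ) ^ (SPN.scope (ch j)).card) := by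
            refine Finset.sum_congr rfl fun j _ => ?_
            rw [hscope j, ← Finset.mul_sum]
            ring
        _ = ∑ j, w j * (2:ℝ) ^ N := by
            refine Finset.sum_congr rfl fun j _ => ?_
            rw [ih j (hcr j) (hd j) (hwr j)]
        _ = (2:ℝ) ^ N := by rw [← Finset.sum_mul, hw1, one_mul]
  | prod k ch ih =>
      obtain ⟨hdj, hdr⟩ := hd
      have hsplit := finset_split (fun j => SPN.eval (ch j)) (fun j => SPN.scope (ch j))
        (fun j => eval_eq_of_agree (ch j)) Finset.univ
        (fun i _ j _ hij => hdj i j hij)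
      have hcard : (SPN.scope (SPN.prod k ch)).card = ∑ j, (SPN.scope (ch j)).card := by
        simp only [SPN.scope]
        exact Finset.card_biUnion fun i _ j _ hij => hdj i j hij
      have hchild : ∀ j, (∑ x : Fin N → Bool, SPN.eval (ch j) x) * (2:ℝ) ^ (SPN.scope (ch j)).card = (2:ℝ) ^ N :=
        fun j => ih j (hc j) (hdr j) (hw j)
      have key : (∑ x : Fin N → Bool, SPN.eval (SPN.prod k ch) x) * (2:ℝ) ^ (SPN.scope (SPN.prod k ch)).card
          * ((2:ℝ) ^ N) ^ k = (2:ℝ) ^ N * ((2:ℝ) ^ N) ^ k := by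
        have e1 : (∑ x : Fin N → Bool, SPN.eval (SPN.prod k ch) x)
            = ∑ x : Fin N → Bool, ∏ j, SPN.eval (ch j) x := rfl
        rw [e1, hcard]
        calc (∑ x : Fin N → Bool, ∏ j, SPN.eval (ch j) x) * (2:ℝ) ^ (∑ j, (SPN.scope (ch j)).card)
              * ((2:ℝ) ^ N) ^ k
            = ((∑ x : Fin N → Bool, ∏ j, SPN.eval (ch j) x) * ((2:ℝ) ^ N) ^ (Finset.univ : Finset (Fin k)).card)
              * (2:ℝ) ^ (∑ j, (SPN.scope (ch j)).card) := by
              rw [Finset.card_univ, Fintype.card_fin]; ring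
          _ = ((2:ℝ) ^ N * ∏ j, ∑ x : Fin N → Bool, SPN.eval (ch j) x)
              * ∏ j, (2:ℝ) ^ (SPN.scope (ch j)).card := by
              rw [hsplit, Finset.prod_pow_eq_pow_sum]
          _ = (2:ℝ) ^ N * ∏ j, ((∑ x : Fin N → Bool, SPN.eval (ch j) x) * (2:ℝ) ^ (SPN.scope (ch j)).card) := by
              rw [Finset.prod_mul_distrib]; ring
          _ = (2:ℝ) ^ N * ∏ j : Fin k, (2:ℝ) ^ N := by
              rw [Finset.prod_congr rfl fun j _ => hchild j]
          _ = (2:ℝ) ^ N * ((2:ℝ) ^ N) ^ k := by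
              rw [Finset.prod_const, Finset.card_univ, Fintype.card_fin]
      have hne : ((2:ℝ) ^ N) ^ k ≠ 0 := by positivity
      exact mul_right_cancel₀ hne key

end SPNAux

/-- For any complete and decomposable SPN whose sum-node edge
weights are nonnegative and sum to 1 at every sum node, the sum of the network
polynomial over all complete assignments of the Boolean variables equals 1. -/
theorem spn_network_polynomial_sums_to_one {N : ℕ} (S : SPN N)
    (hscope : S.scope = Finset.univ)
    (hc : S.complete) (hd : S.decomposable) (hw : S.weightNormalized) :
    ∑ x : Fin N → Bool, S.eval x = 1 := by
  have h := SPNAux.main_lemma S hc hd hw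
  rw [hscope, Finset.card_univ, Fintype.card_fin] at h
  have hne : (2:ℝ) ^ N ≠ 0 := by positivity
  have h1 : (∑ x : Fin N → Bool, S.eval x) * (2:ℝ) ^ N = 1 * (2:ℝ) ^ N := by
    rw [h, one_mul]
  exact mul_right_cancel₀ hne h1
end
end

section
/- In a complete and decomposable SPN with weight-normalized sum nodes, for every node v, the sum of its network polynomial f_v over all assignments of the variables in scope(v) equals 1. -/
noncomputable section

open Finset

namespace SPNAux

open SPN

variable {N : ℕ}

/-- `eval` depends only on the scope. -/
lemma eval_dependsOn (S : SPN N) :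
    ∀ x y : Fin N → Bool, (∀ i ∈ S.scope, x i = y i) → S.eval x = S.eval y := by
  induction S with
  | leaf i b =>
      intro x y h
      simp [SPN.eval, h i (by simp [SPN.scope])]
  | sum k w ch ih =>
      intro x y h
      simp only [SPN.eval]
      refine Finset.sum_congr rfl fun j _ => ?_
      rw [ih j x y fun i hi => h i (by simp [SPN.scope, Finset.mem_biUnion]; exact ⟨j, hi⟩)]
  | prod k ch ih =>
      intro x y h
      simp only [SPN.eval]
      refine Finset.prod_congr rfl fun j _ => ?_
      exact ih j x y fun i hi => h i (by simp [SPN.scope, Finset.mem_biUnion]; exact ⟨j, hi⟩)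

/-- Independence: if `f` depends only on coordinates in `T` and `g` only on
coordinates outside `T`, the sum of the product factorizes. -/
lemma sum_mul_indep (T : Finset (Fin N)) (f g : (Fin N → Bool) → ℝ)
    (hf : ∀ x y : Fin N → Bool, (∀ i ∈ T, x i = y i) → f x = f y)
    (hg : ∀ x y : Fin N → Bool, (∀ i ∉ T, x i = y i) → g x = g y) :
    (∑ x : Fin N → Bool, f x * g x) * (2:ℝ)^N = (∑ x : Fin N → Bool, f x) * (∑ x : Fin N → Bool, g x) := by
  classical
  set e := (Equiv.piEquivPiSubtypeProd (fun i : Fin N => i ∈ T) (fun _ => Bool)).symm with he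
  have hsum : ∀ h : (Fin N → Bool) → ℝ, (∑ x : Fin N → Bool, h x) = ∑ p, h (e p) :=
    fun h => (Equiv.sum_comp e h).symm
  set F : ({ i : Fin N // i ∈ T } → Bool) → ℝ := fun y => f (e (y, fun _ => false)) with hF
  set G : ({ i : Fin N // i ∉ T } → Bool) → ℝ := fun z => g (e (fun _ => false, z)) with hG
  have hfe : ∀ y z, f (e (y, z)) = F y := by
    intro y z
    apply hf
    intro i hi
    simp [he, Equiv.piEquivPiSubtypeProd_symm_apply, hi]
  have hge : ∀ y z, g (e (y, z)) = G z := by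
    intro y z
    apply hg
    intro i hi
    simp [he, Equiv.piEquivPiSubtypeProd_symm_apply, hi]
  have hcard : (Fintype.card ({ i : Fin N // i ∈ T } → Bool) : ℝ) *
      (Fintype.card ({ i : Fin N // i ∉ T } → Bool) : ℝ) = (2:ℝ)^N := by
    have : Fintype.card ({ i : Fin N // i ∈ T } → Bool) *
        Fintype.card ({ i : Fin N // i ∉ T } → Bool) = 2 ^ N := by
      rw [← Fintype.card_prod, Fintype.card_congr e, Fintype.card_fun, Fintype.card_bool,
        Fintype.card_fin]
    exact_mod_cast this
  have h1 : (∑ x : Fin N → Bool, f x * g x) = (∑ y, F y) * (∑ z, G z) := by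
    rw [hsum]
    rw [Fintype.sum_prod_type]
    rw [Finset.sum_mul_sum]
    refine Finset.sum_congr rfl fun y _ => Finset.sum_congr rfl fun z _ => ?_
    rw [hfe y z, hge y z]
  have h2 : (∑ x : Fin N → Bool, f x) =
      (∑ y, F y) * (Fintype.card ({ i : Fin N // i ∉ T } → Bool) : ℝ) := by
    rw [hsum, Fintype.sum_prod_type, Finset.sum_mul]
    refine Finset.sum_congr rfl fun y _ => ?_
    rw [Finset.sum_congr rfl fun z _ => hfe y z, Finset.sum_const, Finset.card_univ,
      nsmul_eq_mul, mul_comm]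
  have h3 : (∑ x : Fin N → Bool, g x) =
      (Fintype.card ({ i : Fin N // i ∈ T } → Bool) : ℝ) * (∑ z, G z) := by
    rw [hsum, Fintype.sum_prod_type]
    rw [Finset.sum_congr rfl fun y _ => Finset.sum_congr rfl fun z _ => hge y z,
      Finset.sum_const, Finset.card_univ, nsmul_eq_mul]
  rw [h1, h2, h3, ← hcard]
  ring

/-- Key lemma: `2 ^ |scope S| * Σ_{x : Fin N → Bool} f_S(x) = 2 ^ N`. -/
lemma key (S : SPN N) (hc : S.complete) (hd : S.decomposable) (hw : S.weightNormalized) :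
    (2:ℝ)^(S.scope.card) * ∑ x : Fin N → Bool, S.eval x = (2:ℝ)^N := by
  classical
  induction S with
  | leaf i b =>
      have hcard : (2:ℝ) * (Fintype.card ({ j : Fin N // j ≠ i } → Bool) : ℝ) = (2:ℝ)^N := by
        have : 2 * Fintype.card ({ j : Fin N // j ≠ i } → Bool) = 2 ^ N := by
          have e := Equiv.piSplitAt i (fun _ : Fin N => Bool)
          rw [← Fintype.card_bool, ← Fintype.card_prod, ← Fintype.card_congr e,
            Fintype.card_fun, Fintype.card_bool, Fintype.card_fin]
        exact_mod_cast this
      have hscope : (SPN.leaf i b : SPN N).scope = {i} := rfl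
      rw [hscope, Finset.card_singleton, pow_one]
      rw [← hcard]
      congr 1
      set e := (Equiv.piSplitAt i (fun _ : Fin N => Bool)).symm with he
      rw [(Equiv.sum_comp e _).symm, Fintype.sum_prod_type]
      have : ∀ (a : Bool) (z : { j : Fin N // j ≠ i } → Bool),
          (SPN.leaf i b : SPN N).eval (e (a, z)) = if a = b then 1 else 0 := by
        intro a z
        simp [SPN.eval, he, Equiv.piSplitAt_symm_apply]
      rw [Finset.sum_congr rfl fun a _ => Finset.sum_congr rfl fun z _ => this a z]
      simp [Finset.sum_ite_eq]
  | sum k w ch ih =>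
      obtain ⟨hc1, hc2⟩ := hc
      obtain ⟨hw1, hw2, hw3⟩ := hw
      rcases Nat.eq_zero_or_pos k with hk | hk
      · subst hk; simp at hw2
      have hscope : ∀ j, (ch j).scope = (SPN.sum k w ch).scope := by
        intro j
        ext a
        simp only [SPN.scope, Finset.mem_biUnion, Finset.mem_univ, true_and]
        constructor
        · exact fun h => ⟨j, h⟩
        · rintro ⟨j', h⟩; rw [hc1 j' j] at h; exact h
      have hev : (∑ x : Fin N → Bool, (SPN.sum k w ch).eval x)
          = ∑ j, w j * ∑ x : Fin N → Bool, (ch j).eval x := by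
        simp only [SPN.eval]
        rw [Finset.sum_comm]
        exact Finset.sum_congr rfl fun j _ => by rw [Finset.mul_sum]
      rw [hev, Finset.mul_sum]
      have : ∀ j : Fin k, (2:ℝ)^((SPN.sum k w ch).scope.card) * (w j * ∑ x : Fin N → Bool, (ch j).eval x)
          = w j * (2:ℝ)^N := by
        intro j
        rw [← ih j (hc2 j) (hd j) (hw3 j), hscope j]
        ring
      rw [Finset.sum_congr rfl fun j _ => this j, ← Finset.sum_mul, hw2, one_mul]
  | prod k ch ih =>
      obtain ⟨hd1, hd2⟩ := hd
      have main : ∀ s : Finset (Fin k),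
          (2:ℝ)^((s.biUnion fun j => (ch j).scope).card) *
            ∑ x : Fin N → Bool, ∏ j ∈ s, (ch j).eval x = (2:ℝ)^N := by
        intro s
        induction s using Finset.induction_on with
        | empty =>
            simp [Finset.card_univ, Fintype.card_fun]
        | @insert a s ha ihs =>
            have hdisj : ∀ j ∈ s, Disjoint ((ch a).scope) ((ch j).scope) := by
              intro j hj
              exact hd1 a j (fun h => ha (h ▸ hj))
            have hdisjU : Disjoint ((ch a).scope) (s.biUnion fun j => (ch j).scope) := by
              rw [Finset.disjoint_biUnion_right]
              exact hdisj
            have hcard : ((insert a s).biUnion fun j => (ch j).scope).card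
                = ((ch a).scope).card + (s.biUnion fun j => (ch j).scope).card := by
              rw [Finset.biUnion_insert, Finset.card_union_of_disjoint hdisjU]
            have hfact := sum_mul_indep ((ch a).scope) ((ch a).eval)
              (fun x => ∏ j ∈ s, (ch j).eval x)
              (eval_dependsOn (ch a))
              (by
                intro x y hxy
                refine Finset.prod_congr rfl fun j hj => ?_
                refine eval_dependsOn (ch j) x y fun i hi => hxy i ?_
                exact fun hiT => absurd hi (Finset.disjoint_left.mp (hdisj j hj) hiT))
            have hsplit : ∀ x : Fin N → Bool, (∏ j ∈ insert a s, (ch j).eval x)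
                = (ch a).eval x * ∏ j ∈ s, (ch j).eval x :=
              fun x => Finset.prod_insert ha
            rw [Finset.sum_congr rfl fun x _ => hsplit x, hcard, pow_add]
            have h2N : (2:ℝ)^N ≠ 0 := by positivity
            apply mul_right_cancel₀ h2N
            calc (2:ℝ)^((ch a).scope).card * (2:ℝ)^((s.biUnion fun j => (ch j).scope).card) *
                  (∑ x : Fin N → Bool, (ch a).eval x * ∏ j ∈ s, (ch j).eval x) * (2:ℝ)^N
                = ((2:ℝ)^((ch a).scope).card * (∑ x : Fin N → Bool, (ch a).eval x)) *
                  ((2:ℝ)^((s.biUnion fun j => (ch j).scope).card) *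
                    (∑ x : Fin N → Bool, ∏ j ∈ s, (ch j).eval x)) := by
                  rw [mul_assoc, hfact]; ring
              _ = (2:ℝ)^N * (2:ℝ)^N := by
                  rw [ih a (hc a) (hd2 a) (hw a), ihs]
      have := main Finset.univ
      have hscope : (SPN.prod k ch).scope = Finset.univ.biUnion fun j => (ch j).scope := rfl
      have hev : ∀ x : Fin N → Bool, (SPN.prod k ch).eval x = ∏ j, (ch j).eval x := fun x => rfl
      rw [hscope, Finset.sum_congr rfl fun x _ => hev x]
      exact this

end SPNAux

/-- In a complete and decomposable SPN with weight-normalized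
sum nodes, for every node `v` the sum of its network polynomial over all
assignments of the variables in `scope v` equals 1.  (Since every node of such
an SPN is itself the root of a complete, decomposable, weight-normalized SPN,
this is stated for all such SPNs `S`, `val S` being the sum of `f_S` over all
assignments of `scope S`.) -/
theorem spn_val_eq_one {N : ℕ} (S : SPN N)
    (hc : S.complete) (hd : S.decomposable) (hw : S.weightNormalized) :
    S.val = 1 := by
  classical
  have hkey := SPNAux.key S hc hd hw
  set e := (Equiv.piEquivPiSubtypeProd (fun i : Fin N => i ∈ S.scope) (fun _ => Bool)).symm with he
  have hagree : ∀ (y : { i : Fin N // i ∈ S.scope } → Bool) (z : { i : Fin N // i ∉ S.scope } → Bool),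
      S.eval (e (y, z)) = S.eval (S.extendScope y) := by
    intro y z
    refine SPNAux.eval_dependsOn S _ _ fun i hi => ?_
    simp [he, Equiv.piEquivPiSubtypeProd_symm_apply, SPN.extendScope, hi]
  have hsum : (∑ x : Fin N → Bool, S.eval x)
      = S.val * (Fintype.card ({ i : Fin N // i ∉ S.scope } → Bool) : ℝ) := by
    rw [(Equiv.sum_comp e _).symm, Fintype.sum_prod_type,
      Finset.sum_congr rfl fun y _ => Finset.sum_congr rfl fun z _ => hagree y z]
    simp only [Finset.sum_const, Finset.card_univ, nsmul_eq_mul]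
    rw [SPN.val, ← Finset.mul_sum, mul_comm]
  have hcard : (2:ℝ)^(S.scope.card) * (Fintype.card ({ i : Fin N // i ∉ S.scope } → Bool) : ℝ) = (2:ℝ)^N := by
    have : 2 ^ S.scope.card * Fintype.card ({ i : Fin N // i ∉ S.scope } → Bool) = 2 ^ N := by
      have e' := Equiv.piEquivPiSubtypeProd (fun i : Fin N => i ∈ S.scope) (fun _ => Bool)
      have h1 : Fintype.card ({ i : Fin N // i ∈ S.scope } → Bool) = 2 ^ S.scope.card := by
        rw [Fintype.card_fun, Fintype.card_bool, Fintype.card_coe]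
      rw [← h1, ← Fintype.card_prod, ← Fintype.card_congr e', Fintype.card_fun,
        Fintype.card_bool, Fintype.card_fin]
    exact_mod_cast this
  rw [hsum] at hkey
  have h : (2:ℝ)^(S.scope.card) * (S.val * (Fintype.card ({ i : Fin N // i ∉ S.scope } → Bool) : ℝ))
      = (2:ℝ)^(S.scope.card) * (Fintype.card ({ i : Fin N // i ∉ S.scope } → Bool) : ℝ) :=
    hkey.trans hcard.symm
  have hpos : (0:ℝ) < (2:ℝ)^(S.scope.card) * (Fintype.card ({ i : Fin N // i ∉ S.scope } → Bool) : ℝ) := by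
    rw [hcard]; positivity
  have hfin : S.val * ((2:ℝ)^(S.scope.card) * (Fintype.card ({ i : Fin N // i ∉ S.scope } → Bool) : ℝ))
      = 1 * ((2:ℝ)^(S.scope.card) * (Fintype.card ({ i : Fin N // i ∉ S.scope } → Bool) : ℝ)) := by
    rw [one_mul]; linear_combination h
  exact mul_right_cancel₀ (ne_of_gt hpos) hfin
end
end

section
/- In a complete SPN, for every sum node v the scope of v equals the scope of each of its children, and every monomial in the fully expanded sum-of-products form of the network polynomial f_v contains exactly one indicator for each variable in scope(v). -/
noncomputable section

open Finset

/-! By induction one proves the sharper count: a variable occurs in every monomial once if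
it lies in the scope and not at all otherwise. A monomial of a product node is the union of
one monomial per child, and decomposability puts each variable of the scope in exactly one
child; a monomial of a sum node is a rescaled monomial of one child, whose scope is that of
the node by completeness. -/

namespace SPN

variable {N : ℕ}

theorem scope_child_eq_scope_sum {k : ℕ} {w : Fin k → ℝ} {ch : Fin k → SPN N}
    (h : ∀ i j, scope (ch i) = scope (ch j)) (j : Fin k) :
    (ch j).scope = (SPN.sum k w ch).scope :=
  Finset.Subset.antisymm (Finset.subset_biUnion_of_mem (fun j' => (ch j').scope) (mem_univ j))
    (Finset.biUnion_subset.2 fun j' _ => (h j' j).le)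

theorem mem_mulMono {a b : Multiset (Monomial N)} {m : Monomial N} :
    m ∈ mulMono a b ↔ ∃ ma ∈ a, ∃ mb ∈ b, m = (ma.1 * mb.1, ma.2 + mb.2) := by
  simp [mulMono, eq_comm]

theorem card_filter_of_mem_foldr_mulMono (p : Fin N × Bool → Prop) [DecidablePred p] :
    ∀ {k : ℕ} (A : Fin k → Multiset (Monomial N)) (c : Fin k → ℕ),
      (∀ j, ∀ m ∈ A j, (m.2.filter p).card = c j) →
      ∀ m ∈ (List.ofFn A).foldr mulMono {(1, 0)}, (m.2.filter p).card = ∑ j, c j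
  | 0, _, _, _, m, hm => by
    rw [List.ofFn_zero, List.foldr_nil, Multiset.mem_singleton] at hm
    simp [hm]
  | _ + 1, A, c, hA, m, hm => by
    rw [List.ofFn_succ, List.foldr_cons] at hm
    obtain ⟨ma, hma, mb, hmb, rfl⟩ := mem_mulMono.1 hm
    rw [Multiset.filter_add, Multiset.card_add, Fin.sum_univ_succ, hA 0 ma hma,
      card_filter_of_mem_foldr_mulMono p _ _ (fun j => hA j.succ) mb hmb]

theorem card_filter_fst_eq_of_mem_monomials {S : SPN N} (hc : S.complete)
    (hd : S.decomposable) {m : Monomial N} (hm : m ∈ S.monomials) (i : Fin N) :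
    (m.2.filter fun p => p.1 = i).card = if i ∈ S.scope then 1 else 0 := by
  induction S generalizing m with
  | leaf i₀ b =>
    rw [monomials, Multiset.mem_singleton] at hm
    subst hm
    rcases eq_or_ne i₀ i with rfl | h
    · simp [scope, Multiset.filter_singleton]
    · simp [scope, Multiset.filter_singleton, h, h.symm]
  | sum k w ch ih =>
    simp only [monomials, Multiset.mem_sum, Multiset.mem_map, mem_univ, true_and] at hm
    obtain ⟨j, m', hm', rfl⟩ := hm
    rw [ih j (hc.2 j) (hd j) hm', scope_child_eq_scope_sum hc.1 j]
  | prod k ch ih =>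
    rw [card_filter_of_mem_foldr_mulMono _ _ _ (fun j _ hm' => ih j (hc j) (hd.2 j) hm') m hm,
      sum_ite_zero _ _ fun j₁ _ j₂ _ h₁ h₂ => by_contra fun hne =>
        disjoint_left.1 (hd.1 j₁ j₂ hne) h₁ h₂]
    simp [scope]

end SPN

/-- In a complete SPN, for every sum node the scope of the node
equals the scope of each of its children, and (assuming additionally
decomposability) every monomial in the fully expanded sum-of-products form of
the network polynomial contains exactly one indicator for each variable of the
scope. -/
theorem spn_complete_scope_and_monomials {N : ℕ} (S : SPN N)
    (hc : S.complete) (hd : S.decomposable) :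
    (∀ (k : ℕ) (w : Fin k → ℝ) (ch : Fin k → SPN N),
      S = SPN.sum k w ch → ∀ j, (ch j).scope = S.scope) ∧
    (∀ m ∈ S.monomials, ∀ i ∈ S.scope,
      (m.2.filter fun p => p.1 = i).card = 1) := by
  refine ⟨?_, fun m hm i hi => ?_⟩
  · rintro k w ch rfl
    exact SPN.scope_child_eq_scope_sum hc.1
  · rw [SPN.card_filter_fst_eq_of_mem_monomials hc hd hm i, if_pos hi]
end
end

section
/- For every node v of a complete and decomposable SPN, val(v) := Σ over assignments of scope(v) of f_v equals: 1 if v is an indicator leaf; ∏_{c ∈ Ch(v)} val(c) if v is a product node; and Σ_{c ∈ Ch(v)} w_{v,c}·val(c) if v is a sum node. -/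
noncomputable section

open Finset

/-!
Identify an assignment of the variables of a scope `s` with a total assignment that is `false`
off `s`. The polynomial of a node depends only on the variables of its scope. At a sum node every
child has the node's scope, so `val` is linear in the children. At a product node the children's
scopes are disjoint, so an assignment of their union is a tuple of assignments of the parts, and
the sum of a product of functions of disjoint sets of variables factors into the product of sums.
-/

section Assignments

variable {ι R : Type*} [DecidableEq ι]

def assignmentsOn [Fintype ι] (s : Finset ι) : Finset (ι → Bool) :=
  {x | ∀ i ∉ s, x i = false}

def falseOutside (s : Finset ι) (x : ι → Bool) : ι → Bool :=
  fun i => if i ∈ s then x i else false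

@[simp]
lemma mem_assignmentsOn [Fintype ι] {s : Finset ι} {x : ι → Bool} :
    x ∈ assignmentsOn s ↔ ∀ i ∉ s, x i = false := by
  simp [assignmentsOn]

lemma falseOutside_mem_assignmentsOn [Fintype ι] (s : Finset ι) (x : ι → Bool) :
    falseOutside s x ∈ assignmentsOn s := by
  simp +contextual [falseOutside]

lemma falseOutside_of_mem_assignmentsOn [Fintype ι] {s : Finset ι} {x : ι → Bool}
    (hx : x ∈ assignmentsOn s) : falseOutside s x = x := by
  ext i
  by_cases hi : i ∈ s <;> simp_all [falseOutside]

lemma DependsOn.apply_falseOutside {f : (ι → Bool) → R} {s : Finset ι} (hf : DependsOn f s)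
    (x : ι → Bool) : f (falseOutside s x) = f x :=
  hf fun i hi => by simp [falseOutside, Finset.mem_coe.mp hi]

lemma assignmentsOn_empty [Fintype ι] : assignmentsOn (∅ : Finset ι) = {fun _ => false} := by
  ext x
  simp [funext_iff]

/-- On disjoint `s` and `t`, an assignment of `s ∪ t` is a pair of assignments of `s` and `t`
(glued by `||`). -/
lemma sum_assignmentsOn_union_mul [Fintype ι] [CommSemiring R] {s t : Finset ι}
    (hst : Disjoint s t) {f g : (ι → Bool) → R} (hf : DependsOn f s) (hg : DependsOn g t) :
    ∑ x ∈ assignmentsOn (s ∪ t), f x * g x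
      = (∑ x ∈ assignmentsOn s, f x) * ∑ x ∈ assignmentsOn t, g x := by
  rw [Finset.sum_mul_sum, ← Finset.sum_product']
  refine Finset.sum_nbij' (fun x => (falseOutside s x, falseOutside t x))
    (fun p i => p.1 i || p.2 i) ?_ ?_ ?_ ?_ ?_
  · intro x _
    simp only [Finset.mem_product]
    exact ⟨falseOutside_mem_assignmentsOn s x, falseOutside_mem_assignmentsOn t x⟩
  · rintro ⟨x, y⟩ hxy
    simp only [Finset.mem_product, mem_assignmentsOn] at hxy ⊢
    intro i hi
    simp [hxy.1 i (fun h => hi (Finset.mem_union_left t h)),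
      hxy.2 i (fun h => hi (Finset.mem_union_right s h))]
  · intro x hx
    ext i
    by_cases his : i ∈ s <;> by_cases hit : i ∈ t <;>
      simp_all [falseOutside]
  · rintro ⟨x, y⟩ hxy
    simp only [Finset.mem_product, mem_assignmentsOn] at hxy
    ext i
    · by_cases his : i ∈ s
      · simp [falseOutside, his, hxy.2 i (Finset.disjoint_left.mp hst his)]
      · simp [falseOutside, his, hxy.1 i his]
    · by_cases hit : i ∈ t
      · simp [falseOutside, hit, hxy.1 i (Finset.disjoint_right.mp hst hit)]
      · simp [falseOutside, hit, hxy.2 i hit]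
  · intro x _
    simp only [hf.apply_falseOutside, hg.apply_falseOutside]

lemma dependsOn_finset_prod [CommMonoid R] {κ : Type*} (J : Finset κ) {A : κ → Finset ι}
    {g : κ → (ι → Bool) → R} (hg : ∀ j, DependsOn (g j) (A j)) :
    DependsOn (fun x => ∏ j ∈ J, g j x) (J.biUnion A) := fun _ _ hxy =>
  Finset.prod_congr rfl fun j hj =>
    hg j fun i hi => hxy i (Finset.mem_coe.mpr (Finset.mem_biUnion.mpr ⟨j, hj, hi⟩))

lemma sum_assignmentsOn_biUnion_prod [Fintype ι] [CommSemiring R] {κ : Type*} [DecidableEq κ]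
    (J : Finset κ) {A : κ → Finset ι} (hA : (J : Set κ).PairwiseDisjoint A)
    {g : κ → (ι → Bool) → R} (hg : ∀ j, DependsOn (g j) (A j)) :
    ∑ x ∈ assignmentsOn (J.biUnion A), ∏ j ∈ J, g j x
      = ∏ j ∈ J, ∑ x ∈ assignmentsOn (A j), g j x := by
  induction J using Finset.induction with
  | empty => simp [assignmentsOn_empty]
  | insert a J ha ih =>
    have hdisj : Disjoint (A a) (J.biUnion A) :=
      (Finset.disjoint_biUnion_right _ _ _).mpr fun j hj =>
        hA (Finset.mem_insert_self a J) (Finset.mem_insert_of_mem hj)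
          (ne_of_mem_of_not_mem hj ha).symm
    simp only [Finset.biUnion_insert, Finset.prod_insert ha]
    rw [sum_assignmentsOn_union_mul hdisj (hg a) (dependsOn_finset_prod J hg),
      ih (hA.subset (by simp))]

end Assignments

namespace SPN

variable {N : ℕ}

lemma eval_dependsOn (S : SPN N) : DependsOn S.eval S.scope := by
  induction S with
  | leaf i b =>
    intro x y hxy
    simp [eval, hxy i (by simp [scope])]
  | sum k w ch ih =>
    intro x y hxy
    refine Finset.sum_congr rfl fun j _ => congrArg (w j * ·) (ih j fun i hi => hxy i ?_)
    simpa [scope] using ⟨j, hi⟩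
  | prod k ch ih => exact dependsOn_finset_prod Finset.univ ih

lemma val_eq_sum_assignmentsOn (S : SPN N) :
    S.val = ∑ x ∈ assignmentsOn S.scope, S.eval x := by
  refine Finset.sum_nbij' S.extendScope (fun x i => x i) ?_ ?_ ?_ ?_ ?_
  · intro y _
    simp +contextual [extendScope]
  · intro x _
    exact Finset.mem_univ _
  · intro y _
    ext i
    simp [extendScope]
  · intro x hx
    ext i
    by_cases hi : i ∈ S.scope
    · simp [extendScope, hi]
    · simp_all [extendScope]
  · intro y _
    rfl

lemma val_leaf (i : Fin N) (b : Bool) : (leaf i b).val = 1 := by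
  rw [val_eq_sum_assignmentsOn, Finset.sum_eq_single_of_mem (fun j => if j = i then b else false)]
  · simp [eval]
  · simp +contextual [scope]
  · intro x hx hne
    have hxi : x i ≠ b := fun hxi => hne <| funext fun j => by
      by_cases hj : j = i
      · simp [hj, hxi]
      · simp only [mem_assignmentsOn, scope, Finset.mem_singleton] at hx
        simp [hj, hx j hj]
    simp [eval, hxi]

lemma val_sum (k : ℕ) (w : Fin k → ℝ) (ch : Fin k → SPN N)
    (hcomp : ∀ i j, scope (ch i) = scope (ch j)) :
    (sum k w ch).val = ∑ j, w j * (ch j).val := by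
  have hscope : ∀ j, scope (sum k w ch) = scope (ch j) := fun j => by
    ext i
    simpa [scope] using ⟨fun ⟨j', hi⟩ => hcomp j' j ▸ hi, fun hi => ⟨j, hi⟩⟩
  simp only [val_eq_sum_assignmentsOn, eval, Finset.mul_sum]
  rw [Finset.sum_comm]
  exact Finset.sum_congr rfl fun j _ => by rw [hscope j]

lemma val_prod (k : ℕ) (ch : Fin k → SPN N)
    (hdis : ∀ i j, i ≠ j → Disjoint (scope (ch i)) (scope (ch j))) :
    (prod k ch).val = ∏ j, (ch j).val := by
  simp only [val_eq_sum_assignmentsOn]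
  exact sum_assignmentsOn_biUnion_prod Finset.univ (fun i _ j _ hij => hdis i j hij)
    fun j => eval_dependsOn (ch j)

end SPN

/-- For every node `v` of a complete and decomposable SPN,
`val v := Σ_{assignments of scope v} f_v` equals: `1` if `v` is an indicator
leaf; `∏_{c ∈ Ch(v)} val c` if `v` is a product node; and
`Σ_{c ∈ Ch(v)} w_{v,c} · val c` if `v` is a sum node. -/
theorem spn_val_recursion {N : ℕ} (S : SPN N)
    (hc : S.complete) (hd : S.decomposable) :
    (∀ (i : Fin N) (b : Bool), S = SPN.leaf i b → S.val = 1) ∧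
    (∀ (k : ℕ) (ch : Fin k → SPN N), S = SPN.prod k ch →
      S.val = ∏ j, (ch j).val) ∧
    (∀ (k : ℕ) (w : Fin k → ℝ) (ch : Fin k → SPN N), S = SPN.sum k w ch →
      S.val = ∑ j, w j * (ch j).val) := by
  refine ⟨?_, ?_, ?_⟩
  · rintro i b rfl
    exact SPN.val_leaf i b
  · rintro k ch rfl
    exact SPN.val_prod k ch hd.1
  · rintro k w ch rfl
    exact SPN.val_sum k w ch hc.1
end
end

section
/- In a normal SPN S, let p be a product node with children p_1,...,p_l, and let v_1,...,v_k be the sum nodes lying on a fixed path from the root to p, with branch choices v_1*,...,v_k* selecting that path. Then, under the joint distribution over observed variables and hidden variables (one hidden variable H_v per sum node v, with Pr(H_v = i) = w_i for the i-th outgoing weight), the conditional distribution of the observed variables in scope(p) given H_{v_1}=v_1*,...,H_{v_k}=v_k* factorizes as the product over i of the conditional distributions of the observed variables in scope(p_i). -/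
noncomputable section

open Finset

namespace SPN

variable {N : ℕ}

lemma eval_congr (S : SPN N) : ∀ x y : Fin N → Bool,
    (∀ i ∈ S.scope, x i = y i) → S.eval x = S.eval y := by
  induction S with
  | leaf i b =>
      intro x y h
      have := h i (by simp [scope])
      simp [eval, this]
  | sum k w ch ih =>
      intro x y h
      simp only [eval]
      refine Finset.sum_congr rfl fun j _ => ?_
      rw [ih j x y fun i hi => h i (Finset.mem_biUnion.mpr ⟨j, Finset.mem_univ j, hi⟩)]
  | prod k ch ih =>
      intro x y h
      simp only [eval]
      refine Finset.prod_congr rfl fun j _ => ?_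
      exact ih j x y fun i hi => h i (Finset.mem_biUnion.mpr ⟨j, Finset.mem_univ j, hi⟩)

lemma sum_eval_eq (S : SPN N) :
    (∑ x : Fin N → Bool, S.eval x) * 2 ^ S.scope.card = 2 ^ N * S.val := by
  classical
  let e := Equiv.piEquivPiSubtypeProd (fun i : Fin N => i ∈ S.scope) (fun _ => Bool)
  have hsum : ∑ x : Fin N → Bool, S.eval x
      = ∑ a : {i // i ∈ S.scope} → Bool, ∑ b : {i // ¬ i ∈ S.scope} → Bool,
          S.eval (e.symm (a, b)) := by
    rw [← Equiv.sum_comp e.symm S.eval, Fintype.sum_prod_type]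
  have heval : ∀ (a : {i // i ∈ S.scope} → Bool) b,
      S.eval (e.symm (a, b)) = S.eval (S.extendScope a) := by
    intro a b
    apply eval_congr
    intro i hi
    simp [e, Equiv.piEquivPiSubtypeProd_symm_apply, extendScope, hi]
  have hB : ∑ x : Fin N → Bool, S.eval x
      = (Fintype.card ({i // ¬ i ∈ S.scope} → Bool) : ℝ) * S.val := by
    rw [hsum]
    simp only [heval, Finset.sum_const, Finset.card_univ, nsmul_eq_mul]
    rw [← Finset.mul_sum]
    rfl
  have hA : Fintype.card ({i // i ∈ S.scope} → Bool) = 2 ^ S.scope.card := by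
    simp [Fintype.card_fun]
  have hAB : Fintype.card ({i // i ∈ S.scope} → Bool)
      * Fintype.card ({i // ¬ i ∈ S.scope} → Bool) = 2 ^ N := by
    rw [← Fintype.card_prod, ← Fintype.card_congr e]
    simp [Fintype.card_fun]
  have hcast : (Fintype.card ({i // ¬ i ∈ S.scope} → Bool) : ℝ) * 2 ^ S.scope.card
      = 2 ^ N := by
    rw [hA] at hAB
    have := congrArg (fun n : ℕ => (n : ℝ)) hAB
    push_cast at this
    linear_combination this
  rw [hB]
  linear_combination S.val * hcast

lemma sum_mul_split (s : Finset (Fin N)) (f g : (Fin N → Bool) → ℝ)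
    (hf : ∀ x y, (∀ i ∈ s, x i = y i) → f x = f y)
    (hg : ∀ x y, (∀ i, i ∉ s → x i = y i) → g x = g y) :
    (∑ x : Fin N → Bool, f x * g x) * 2 ^ N
      = (∑ x : Fin N → Bool, f x) * (∑ x : Fin N → Bool, g x) := by
  classical
  let e := Equiv.piEquivPiSubtypeProd (fun i : Fin N => i ∈ s) (fun _ => Bool)
  have key : ∀ (F : (Fin N → Bool) → ℝ), ∑ x, F x
      = ∑ a : {i // i ∈ s} → Bool, ∑ b : {i // ¬ i ∈ s} → Bool, F (e.symm (a, b)) := by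
    intro F
    rw [← Equiv.sum_comp e.symm F, Fintype.sum_prod_type]
  set b₀ : {i // ¬ i ∈ s} → Bool := fun _ => false with hb₀
  set a₀ : {i // i ∈ s} → Bool := fun _ => false with ha₀
  have hfe : ∀ a b, f (e.symm (a, b)) = f (e.symm (a, b₀)) := by
    intro a b
    apply hf
    intro i hi
    simp [e, Equiv.piEquivPiSubtypeProd_symm_apply, hi]
  have hge : ∀ a b, g (e.symm (a, b)) = g (e.symm (a₀, b)) := by
    intro a b
    apply hg
    intro i hi
    simp [e, Equiv.piEquivPiSubtypeProd_symm_apply, hi]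
  have hAB : Fintype.card ({i // i ∈ s} → Bool)
      * Fintype.card ({i // ¬ i ∈ s} → Bool) = 2 ^ N := by
    rw [← Fintype.card_prod, ← Fintype.card_congr e]
    simp [Fintype.card_fun]
  have h1 : ∑ x : Fin N → Bool, f x * g x
      = (∑ a : {i // i ∈ s} → Bool, f (e.symm (a, b₀)))
        * (∑ b : {i // ¬ i ∈ s} → Bool, g (e.symm (a₀, b))) := by
    rw [key fun x => f x * g x, Finset.sum_mul_sum]
    refine Finset.sum_congr rfl fun a _ => Finset.sum_congr rfl fun b _ => ?_
    rw [hfe a b, hge a b]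
  have h2 : ∑ x : Fin N → Bool, f x
      = (Fintype.card ({i // ¬ i ∈ s} → Bool) : ℝ)
        * ∑ a : {i // i ∈ s} → Bool, f (e.symm (a, b₀)) := by
    rw [key f]
    simp only [hfe, Finset.sum_const, Finset.card_univ, nsmul_eq_mul]
    rw [← Finset.mul_sum]
  have h3 : ∑ x : Fin N → Bool, g x
      = (Fintype.card ({i // i ∈ s} → Bool) : ℝ)
        * ∑ b : {i // ¬ i ∈ s} → Bool, g (e.symm (a₀, b)) := by
    rw [key g]
    rw [Finset.sum_comm]
    simp only [hge, Finset.sum_const, Finset.card_univ, nsmul_eq_mul]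
    rw [← Finset.mul_sum]
  have hcast : (Fintype.card ({i // i ∈ s} → Bool) : ℝ)
      * (Fintype.card ({i // ¬ i ∈ s} → Bool) : ℝ) = 2 ^ N := by
    have := congrArg (fun n : ℕ => (n : ℝ)) hAB
    push_cast at this
    exact this
  rw [h1, h2, h3, ← hcast]
  ring

lemma sum_prod_disjoint {l : ℕ} (f : Fin l → (Fin N → Bool) → ℝ)
    (s : Fin l → Finset (Fin N))
    (hdep : ∀ j x y, (∀ i ∈ s j, x i = y i) → f j x = f j y)
    (hdisj : ∀ i j, i ≠ j → Disjoint (s i) (s j)) (A : Finset (Fin l)) :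
    (∑ x : Fin N → Bool, ∏ j ∈ A, f j x) * (2 ^ N) ^ A.card
      = (∏ j ∈ A, ∑ x : Fin N → Bool, f j x) * 2 ^ N := by
  classical
  induction A using Finset.cons_induction with
  | empty =>
      simp only [Finset.prod_empty, Finset.card_empty, pow_zero, mul_one,
        Finset.sum_const, Finset.card_univ, nsmul_eq_mul, mul_one, one_mul]
      simp [Fintype.card_fun]
  | cons a A ha ih =>
      rw [Finset.card_cons, Finset.prod_cons, pow_succ]
      have h1 := sum_mul_split (s a) (f a) (fun x => ∏ j ∈ A, f j x)
        (hdep a)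
        (by
          intro x y h
          refine Finset.prod_congr rfl fun j hj => ?_
          refine hdep j x y fun i hi => h i ?_
          intro hia
          have hne : j ≠ a := by rintro rfl; exact ha hj
          exact (Finset.disjoint_left.mp (hdisj j a hne)) hi hia)
      have hgoal : (∑ x : Fin N → Bool, f a x * ∏ j ∈ A, f j x)
          * ((2 ^ N) ^ A.card * 2 ^ N)
          = ((∑ x : Fin N → Bool, f a x) * ∏ j ∈ A, ∑ x : Fin N → Bool, f j x)
            * 2 ^ N := by
        calc (∑ x : Fin N → Bool, f a x * ∏ j ∈ A, f j x) * ((2 ^ N) ^ A.card * 2 ^ N)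
            = ((∑ x : Fin N → Bool, f a x * ∏ j ∈ A, f j x) * 2 ^ N)
              * (2 ^ N) ^ A.card := by ring
          _ = ((∑ x : Fin N → Bool, f a x) * ∑ x : Fin N → Bool, ∏ j ∈ A, f j x)
              * (2 ^ N) ^ A.card := by rw [h1]
          _ = (∑ x : Fin N → Bool, f a x)
              * ((∑ x : Fin N → Bool, ∏ j ∈ A, f j x) * (2 ^ N) ^ A.card) := by ring
          _ = (∑ x : Fin N → Bool, f a x)
              * ((∏ j ∈ A, ∑ x : Fin N → Bool, f j x) * 2 ^ N) := by rw [ih]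
          _ = _ := by ring
      convert hgoal using 2
      refine Finset.sum_congr rfl fun x _ => ?_
      rw [Finset.prod_cons]

lemma decomposable_of_isChild {c p : SPN N} (h : IsChild c p)
    (hp : p.decomposable) : c.decomposable := by
  cases h with
  | sum j => exact hp j
  | prod j => exact hp.2 j

lemma decomposable_of_descendant {p S : SPN N} (h : Descendant p S)
    (hS : S.decomposable) : p.decomposable := by
  induction h using Relation.ReflTransGen.head_induction_on with
  | refl => exact hS
  | head hab _ ih => exact decomposable_of_isChild hab ih

end SPN

/-- In a normal SPN `S`, let `p` be a product node with
children `ch` reached from the root by a path whose sum nodes are conditioned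
on the branch choices selecting that path (one hidden variable per sum node).
The sub-SPN obtained by this conditioning is rooted at `p`, and the conditional
distribution of the observed variables in `scope p` given those hidden-variable
values factorizes as the product over the children of the conditional
distributions of the observed variables in `scope (ch i)`:
`Pr_p(x|_{scope p}) = ∏_i Pr_{ch i}(x|_{scope (ch i)})`. -/
theorem spn_csi_factorization {N : ℕ} (S : SPN N) (hn : S.normal)
    (p : SPN N) (hpath : SPN.Descendant p S)
    (l : ℕ) (ch : Fin l → SPN N) (hp : p = SPN.prod l ch) :
    ∀ x : Fin N → Bool, p.Pr x = ∏ i, (ch i).Pr x := by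
  subst hp
  have hdec : (SPN.prod l ch).decomposable :=
    SPN.decomposable_of_descendant hpath hn.2.1
  have hd1 : ∀ i j, i ≠ j → Disjoint ((ch i).scope) ((ch j).scope) := hdec.1
  have h2N : (2 : ℝ) ^ N ≠ 0 := by positivity
  have key := SPN.sum_prod_disjoint (fun j => (ch j).eval) (fun j => (ch j).scope)
    (fun j x y h => SPN.eval_congr (ch j) x y h) hd1 Finset.univ
  rw [Finset.card_univ, Fintype.card_fin] at key
  have hcard : (SPN.prod l ch).scope.card = ∑ j, (ch j).scope.card := by
    show (Finset.univ.biUnion fun j => (ch j).scope).card = _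
    rw [Finset.card_biUnion]
    intro i _ j _ hij
    exact hd1 i j hij
  have hevalsum : (∑ x : Fin N → Bool, SPN.eval (SPN.prod l ch) x)
      = ∑ x : Fin N → Bool, ∏ j, (ch j).eval x := rfl
  have hval : (SPN.prod l ch).val = ∏ j, (ch j).val := by
    have hj : ∀ j, (ch j).val
        = (∑ x : Fin N → Bool, (ch j).eval x) * 2 ^ ((ch j).scope.card) / 2 ^ N := by
      intro j
      rw [eq_div_iff h2N, mul_comm ((SPN.val (ch j))) ((2:ℝ)^N)]
      exact (SPN.sum_eval_eq (ch j)).symm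
    have hpv : (SPN.prod l ch).val
        = (∑ x : Fin N → Bool, SPN.eval (SPN.prod l ch) x)
          * 2 ^ ((SPN.prod l ch).scope.card) / 2 ^ N := by
      rw [eq_div_iff h2N, mul_comm ((SPN.val (SPN.prod l ch))) ((2:ℝ)^N)]
      exact (SPN.sum_eval_eq (SPN.prod l ch)).symm
    rw [hpv, Finset.prod_congr rfl fun j _ => hj j]
    rw [Finset.prod_div_distrib, Finset.prod_const, Finset.prod_mul_distrib,
      Finset.prod_pow_eq_pow_sum]
    rw [hevalsum, hcard, Finset.card_univ, Fintype.card_fin]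
    rw [div_eq_div_iff h2N (by positivity)]
    linear_combination ((2:ℝ) ^ ∑ j, (ch j).scope.card) * key
  intro x
  have hevalx : SPN.eval (SPN.prod l ch) x = ∏ j, (ch j).eval x := rfl
  unfold SPN.Pr
  rw [hevalx, hval, ← Finset.prod_div_distrib]
end
end

section
/- The size of the Bayesian network B constructed from a normal SPN S over N Boolean variables is O(N·|S|): the total size of all ADD-represented CPDs plus the number of nodes and edges of the bipartite DAG is at most N|S| + |S| + 2N|S|. -/
noncomputable section

open Finset

namespace SPN

lemma size_pos' {N : ℕ} (S : SPN N) : 1 ≤ S.size := by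
  induction S with
  | leaf i b => simp [size]
  | sum k w ch ih => simp only [size]; omega
  | prod k ch ih => simp only [size]; omega

lemma addSize_le_size' {N : ℕ} (S : SPN N) (X : Fin N) : S.addSize X ≤ S.size := by
  induction S with
  | leaf i b => simp only [addSize, size]; split <;> omega
  | sum k w ch ih =>
      simp only [addSize, size]
      have h1 : ∑ j, (ch j).addSize X ≤ ∑ j, (ch j).size :=
        Finset.sum_le_sum fun j _ => ih j
      have h2 : (Finset.univ.filter fun j => X ∈ scope (ch j)).card ≤ k :=
        (Finset.card_filter_le _ _).trans (by simp)
      split <;> omega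
  | prod k ch ih =>
      simp only [addSize, size]
      have h1 : ∑ j, (ch j).addSize X ≤ ∑ j, (ch j).size :=
        Finset.sum_le_sum fun j _ => ih j
      have h2 : (Finset.univ.filter fun j => X ∈ scope (ch j)).card ≤ k :=
        (Finset.card_filter_le _ _).trans (by simp)
      split <;> omega

lemma stumpsSize_le_size' {N : ℕ} (S : SPN N) : S.stumpsSize ≤ S.size := by
  induction S with
  | leaf i b => simp [stumpsSize, size]
  | sum k w ch ih =>
      simp only [stumpsSize, size]
      have h1 : ∑ j, (ch j).stumpsSize ≤ ∑ j, (ch j).size :=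
        Finset.sum_le_sum fun j _ => ih j
      omega
  | prod k ch ih =>
      simp only [stumpsSize, size]
      have h1 : ∑ j, (ch j).stumpsSize ≤ ∑ j, (ch j).size :=
        Finset.sum_le_sum fun j _ => ih j
      omega

lemma stump_facts' {N k : ℕ} {w : Fin k → ℝ} {ch : Fin k → SPN N}
    (h : isStump (SPN.sum k w ch)) :
    1 ≤ k ∧ (scope (SPN.sum k w ch)).Nonempty ∧
      ∀ j, countSum (ch j) + sumScopeEdges (ch j) = 0 := by
  match k, w, ch, h with
  | 2, w, ch, ⟨⟨i, h0, h1⟩, _⟩ =>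
    refine ⟨by omega, ⟨i, ?_⟩, ?_⟩
    · simp only [scope, Finset.mem_biUnion]
      exact ⟨0, Finset.mem_univ _, by rw [h0]; simp [scope]⟩
    · intro j
      fin_cases j
      · show (ch 0).countSum + (ch 0).sumScopeEdges = 0
        rw [h0]; simp [countSum, sumScopeEdges]
      · show (ch 1).countSum + (ch 1).sumScopeEdges = 0
        rw [h1]; simp [countSum, sumScopeEdges]

lemma countSum_edges_le' {N : ℕ} (S : SPN N) (h : S.normal3) :
    S.countSum + S.sumScopeEdges ≤ N * S.size := by
  induction S with
  | leaf i b => simp [normal3] at h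
  | sum k w ch ih =>
      have key : 1 ≤ k ∧ (scope (SPN.sum k w ch)).Nonempty ∧
          ∀ j, countSum (ch j) + sumScopeEdges (ch j) ≤ N * size (ch j) := by
        rcases h with h | ⟨hcard, hch⟩
        · obtain ⟨hk, hne, hz⟩ := stump_facts' h
          exact ⟨hk, hne, fun j => (hz j).le.trans (Nat.zero_le _)⟩
        · have hne : (scope (SPN.sum k w ch)).Nonempty :=
            Finset.card_pos.mp (by omega)
          refine ⟨?_, hne, fun j => ih j (hch j)⟩
          obtain ⟨x, hx⟩ := hne
          simp only [scope, Finset.mem_biUnion] at hx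
          obtain ⟨j, _, _⟩ := hx
          exact j.pos
      obtain ⟨hk, hne, hch⟩ := key
      obtain ⟨i, _⟩ := hne
      have hN : 1 ≤ N := i.pos
      have hsum : (∑ j, countSum (ch j)) + (∑ j, sumScopeEdges (ch j))
          ≤ N * ∑ j, size (ch j) := by
        rw [Finset.mul_sum, ← Finset.sum_add_distrib]
        exact Finset.sum_le_sum fun j _ => hch j
      have hcard : (scope (SPN.sum k w ch)).card ≤ N :=
        (Finset.card_le_univ _).trans (by simp)
      have hNk : 1 ≤ N * k := Nat.mul_pos hN hk
      simp only [countSum, sumScopeEdges, size]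
      have : N * (1 + k + ∑ j, size (ch j))
          = N + N * k + N * ∑ j, size (ch j) := by ring
      omega
  | prod k ch ih =>
      have hsum : (∑ j, countSum (ch j)) + (∑ j, sumScopeEdges (ch j))
          ≤ N * ∑ j, size (ch j) := by
        rw [Finset.mul_sum, ← Finset.sum_add_distrib]
        exact Finset.sum_le_sum fun j _ => ih j (h j)
      simp only [countSum, sumScopeEdges, size]
      have : N * (1 + k + ∑ j, size (ch j))
          = N * (1 + k) + N * ∑ j, size (ch j) := by ring
      omega

end SPN

/-- The size of the Bayesian network `B` constructed from a
normal SPN `S` over `N` Boolean variables is `O(N·|S|)`: the total size of all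
ADD-represented CPDs (the ADD `A_X` of each observable `X` and the decision
stump of each hidden variable) plus the number of nodes and edges of the
bipartite DAG is at most `N·|S| + |S| + 2·N·|S|`. -/
theorem bn_size_bound {N : ℕ} (S : SPN N) (hn : S.normal) :
    (∑ X : Fin N, S.addSize X) + S.stumpsSize +
      (N + S.countSum + S.sumScopeEdges)
      ≤ N * S.size + S.size + 2 * (N * S.size) := by
  obtain ⟨_, _, _, h3⟩ := hn
  have h1 : (∑ X : Fin N, S.addSize X) ≤ N * S.size := by
    calc (∑ X : Fin N, S.addSize X) ≤ ∑ _X : Fin N, S.size :=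
          Finset.sum_le_sum fun X _ => SPN.addSize_le_size' S X
      _ = N * S.size := by simp [Finset.sum_const, mul_comm]
  have h2 : S.stumpsSize ≤ S.size := SPN.stumpsSize_le_size' S
  have h4 : S.countSum + S.sumScopeEdges ≤ N * S.size := SPN.countSum_edges_le' S h3
  have h5 : N ≤ N * S.size := Nat.le_mul_of_pos_right N (SPN.size_pos' S)
  omega
end
end
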